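/- Let X be a nonempty finite set, let F_A, F_B : X → {-1, 1}, let c ≥ 0, and let u, v : X → ℝ satisfy |u(x) - v(x)| ≤ 2c for every x ∈ X. Let δ denote the fraction of elements x ∈ X with F_A(x) ≠ F_B(x). Then the average over x ∈ X of ((u(x) - F_A(x))^2 + (v(x) - F_B(x))^2)/2 is at least δ · (max(1 - c, 0))^2. -/

import Mathlib

/-! On a query where the tasks disagree, `|F_A x - F_B x| = 2` while the predictions differ by at
most `2c`, so the two errors `u x - F_A x` and `v x - F_B x` differ by at least `2 - 2c`; the mean of
their squares is then at least `(1 - c)²`. Summing over the disagreement set gives the bound. -/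

lemma two_le_abs_sub_of_ne_of_sign {p q : ℝ} (hp : p = 1 ∨ p = -1) (hq : q = 1 ∨ q = -1)
    (hpq : p ≠ q) : 2 ≤ |p - q| := by
  rcases hp with rfl | rfl <;> rcases hq with rfl | rfl <;>
    first | exact absurd rfl hpq | norm_num

lemma sq_max_one_sub_le_of_abs_sub_le {a b p q c : ℝ} (hab : |a - b| ≤ 2 * c)
    (hpq : 2 ≤ |p - q|) : max (1 - c) 0 ^ 2 ≤ ((a - p) ^ 2 + (b - q) ^ 2) / 2 := by
  have hgap : 2 - 2 * c ≤ |(a - p) - (b - q)| := by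
    rw [show (a - p) - (b - q) = -((p - q) - (a - b)) by ring, abs_neg]
    linarith [abs_sub_abs_le_abs_sub (p - q) (a - b)]
  have hmax : max (1 - c) 0 ≤ |(a - p) - (b - q)| / 2 :=
    max_le (by linarith) (by positivity)
  calc max (1 - c) 0 ^ 2 ≤ (|(a - p) - (b - q)| / 2) ^ 2 :=
        pow_le_pow_left₀ (le_max_right _ _) hmax 2
    _ = ((a - p) - (b - q)) ^ 2 / 4 := by rw [div_pow, sq_abs]; norm_num
    _ ≤ ((a - p) ^ 2 + (b - q) ^ 2) / 2 := by nlinarith [sq_nonneg ((a - p) + (b - q))]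

lemma Finset.card_filter_mul_le_sum {ι R : Type*} [Semiring R] [PartialOrder R]
    [IsOrderedAddMonoid R] (s : Finset ι) (P : ι → Prop) [DecidablePred P] {f : ι → R} {m : R}
    (hf : ∀ i ∈ s, 0 ≤ f i) (hm : ∀ i ∈ s, P i → m ≤ f i) :
    ((s.filter P).card : R) * m ≤ ∑ i ∈ s, f i := by
  rw [← nsmul_eq_mul]
  calc (s.filter P).card • m ≤ ∑ i ∈ s.filter P, f i :=
        card_nsmul_le_sum _ _ _ fun i hi ↦ (mem_filter.mp hi).elim (hm i)
    _ ≤ ∑ i ∈ s, f i := sum_le_sum_of_subset_of_nonneg (filter_subset _ _) fun i hi _ ↦ hf i hi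

open scoped Classical

theorem stmt2_general {X : Type*} [Fintype X]
    (FA FB : X → ℝ) (hFA : ∀ x, FA x = 1 ∨ FA x = -1) (hFB : ∀ x, FB x = 1 ∨ FB x = -1)
    (c : ℝ) (u v : X → ℝ) (huv : ∀ x, |u x - v x| ≤ 2 * c) :
    ((Finset.univ.filter (fun x => FA x ≠ FB x)).card : ℝ) / (Fintype.card X)
        * (max (1 - c) 0) ^ 2
      ≤ (∑ x, ((u x - FA x) ^ 2 + (v x - FB x) ^ 2) / 2) / (Fintype.card X) := by
  rw [div_mul_eq_mul_div]
  refine div_le_div_of_nonneg_right ?_ (Nat.cast_nonneg _)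
  refine Finset.card_filter_mul_le_sum _ _ (fun x _ ↦ by positivity) fun x _ hx ↦ ?_
  exact sq_max_one_sub_le_of_abs_sub_le (huv x) (two_le_abs_sub_of_ne_of_sign (hFA x) (hFB x) hx)

theorem stmt2 {X : Type*} [Fintype X] [Nonempty X]
    (FA FB : X → ℝ) (hFA : ∀ x, FA x = 1 ∨ FA x = -1) (hFB : ∀ x, FB x = 1 ∨ FB x = -1)
    (c : ℝ) (hc : 0 ≤ c) (u v : X → ℝ) (huv : ∀ x, |u x - v x| ≤ 2 * c) :
    ((Finset.univ.filter (fun x => FA x ≠ FB x)).card : ℝ) / (Fintype.card X)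
        * (max (1 - c) 0) ^ 2
      ≤ (∑ x, ((u x - FA x) ^ 2 + (v x - FB x) ^ 2) / 2) / (Fintype.card X) :=
  stmt2_general FA FB hFA hFB c u v huv
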